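/- Let μ ≥ 0, σ > 0, n ∈ N. Then the optimal Gaussian monopoly revenue satisfies the lower bound R(μ, σ²/n) ≥ μ − σ·sqrt(ln n / n) − μ/sqrt(2π n ln n), achieved by the price p = μ − σ·sqrt(ln n / n). -/

import Mathlib

open MeasureTheory

/-- The standard normal density. -/
noncomputable def stdPDF (x : ℝ) : ℝ := (Real.sqrt (2 * Real.pi))⁻¹ * Real.exp (-x ^ 2 / 2)

/-- The standard normal cumulative distribution function. -/
noncomputable def Phi (x : ℝ) : ℝ := ∫ t in Set.Iic x, stdPDF t

lemma stdPDF_eq : stdPDF = ProbabilityTheory.gaussianPDFReal 0 1 := by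
  ext x
  simp [stdPDF, ProbabilityTheory.gaussianPDFReal]

lemma stdPDF_nonneg (x : ℝ) : 0 ≤ stdPDF x := by
  rw [stdPDF_eq]; exact ProbabilityTheory.gaussianPDFReal_nonneg 0 1 x

lemma integrable_stdPDF : Integrable stdPDF := by
  rw [stdPDF_eq]; exact ProbabilityTheory.integrable_gaussianPDFReal 0 1

lemma integral_stdPDF : ∫ x, stdPDF x = 1 := by
  rw [stdPDF_eq]; exact ProbabilityTheory.integral_gaussianPDFReal_eq_one 0 one_ne_zero

lemma one_sub_Phi (x : ℝ) : 1 - Phi x = ∫ t in Set.Ioi x, stdPDF t := by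
  have := intervalIntegral.integral_Iic_add_Ioi (μ := volume) (b := x)
    integrable_stdPDF.integrableOn integrable_stdPDF.integrableOn
  rw [integral_stdPDF] at this
  rw [Phi]; linarith

lemma Phi_nonneg (x : ℝ) : 0 ≤ Phi x :=
  setIntegral_nonneg measurableSet_Iic fun t _ => stdPDF_nonneg t

lemma Phi_le_one (x : ℝ) : Phi x ≤ 1 := by
  have h := one_sub_Phi x
  have : 0 ≤ ∫ t in Set.Ioi x, stdPDF t :=
    setIntegral_nonneg measurableSet_Ioi fun t _ => stdPDF_nonneg t
  linarith

lemma Phi_neg (x : ℝ) : Phi (-x) = 1 - Phi x := by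
  rw [one_sub_Phi, Phi, ← integral_comp_neg_Ioi]
  congr 1
  ext t
  simp [stdPDF, neg_pow]

open Filter in
lemma neg_stdPDF_aux (z : ℝ) :
    (∀ x ∈ Set.Ici z, HasDerivAt (fun t => -stdPDF t) (x * stdPDF x) x) ∧
      Tendsto (fun t => -stdPDF t) atTop (nhds 0) := by
  constructor
  · intro x _
    have h1 : HasDerivAt (fun x : ℝ => -x ^ 2 / 2) (-x) x := by
      have := ((hasDerivAt_pow 2 x).neg.div_const 2)
      refine this.congr_deriv ?_
      push_cast
      ring
    have h2 := (h1.exp.const_mul ((Real.sqrt (2 * Real.pi))⁻¹)).neg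
    refine h2.congr_deriv ?_
    ring_nf
    rw [stdPDF]
    ring
  · have h1 : Tendsto (fun t : ℝ => -t ^ 2 / 2) atTop atBot := by
      apply Filter.Tendsto.atBot_div_const (by norm_num : (0:ℝ) < 2)
      exact Filter.tendsto_neg_atTop_atBot.comp (tendsto_pow_atTop two_ne_zero)
    have h2 := (Real.tendsto_exp_atBot.comp h1).const_mul ((Real.sqrt (2 * Real.pi))⁻¹)
    simp only [mul_zero] at h2
    simpa [stdPDF, Function.comp] using h2.neg

lemma integrableOn_mul_stdPDF (z : ℝ) (hz : 0 < z) :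
    IntegrableOn (fun t => t * stdPDF t) (Set.Ioi z) := by
  obtain ⟨hd, ht⟩ := neg_stdPDF_aux z
  exact integrableOn_Ioi_deriv_of_nonneg
    (hd z Set.self_mem_Ici).continuousAt.continuousWithinAt
    (fun x hx => hd x (Set.mem_Ici.mpr (le_of_lt hx)))
    (fun x hx => mul_nonneg (hz.trans hx).le (stdPDF_nonneg x)) ht

lemma integral_Ioi_mul_stdPDF (z : ℝ) (hz : 0 < z) :
    ∫ t in Set.Ioi z, t * stdPDF t = stdPDF z := by
  obtain ⟨hd, ht⟩ := neg_stdPDF_aux z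
  have := integral_Ioi_of_hasDerivAt_of_nonneg
    (hd z Set.self_mem_Ici).continuousAt.continuousWithinAt
    (fun x hx => hd x (Set.mem_Ici.mpr (le_of_lt hx)))
    (fun x hx => mul_nonneg (hz.trans hx).le (stdPDF_nonneg x)) ht
  rw [this]; ring

lemma mills {z : ℝ} (hz : 0 < z) : (∫ t in Set.Ioi z, stdPDF t) ≤ stdPDF z / z := by
  have hint : IntegrableOn (fun t => z⁻¹ * (t * stdPDF t)) (Set.Ioi z) :=
    (integrableOn_mul_stdPDF z hz).const_mul _
  have h1 : (∫ t in Set.Ioi z, stdPDF t) ≤ ∫ t in Set.Ioi z, z⁻¹ * (t * stdPDF t) := by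
    refine setIntegral_mono_on integrable_stdPDF.integrableOn hint measurableSet_Ioi ?_
    intro t ht
    rw [← mul_assoc]
    refine le_mul_of_one_le_left (stdPDF_nonneg t) ?_
    rw [inv_mul_eq_div, le_div_iff₀ hz, one_mul]
    exact (Set.mem_Ioi.mp ht).le
  rw [integral_const_mul, integral_Ioi_mul_stdPDF z hz, inv_mul_eq_div] at h1
  exact h1

lemma one_sub_Phi_le {z : ℝ} (hz : 0 < z) : 1 - Phi z ≤ stdPDF z / z := by
  rw [one_sub_Phi]; exact mills hz

lemma stdPDF_le_one (z : ℝ) : stdPDF z ≤ 1 := by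
  have h1 : (1:ℝ) ≤ Real.sqrt (2 * Real.pi) := by
    rw [show (1:ℝ) = Real.sqrt 1 by simp]
    exact Real.sqrt_le_sqrt (by nlinarith [Real.pi_gt_three])
  have h2 : Real.exp (-z ^ 2 / 2) ≤ 1 := by
    rw [← Real.exp_zero]
    exact Real.exp_le_exp.mpr (by nlinarith [sq_nonneg z])
  have h3 : (Real.sqrt (2 * Real.pi))⁻¹ ≤ 1 := inv_le_one_of_one_le₀ h1
  calc stdPDF z ≤ 1 * 1 := by
        refine mul_le_mul h3 h2 (Real.exp_pos _).le zero_le_one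
      _ = 1 := by ring

lemma revBound (μ σ : ℝ) (hμ : 0 ≤ μ) (hσ : 0 < σ) (N : ℝ) (hN : 1 ≤ N) (p : ℝ) :
    p * (1 - Phi ((p - μ) * Real.sqrt N / σ)) ≤ μ + σ := by
  set z := (p - μ) * Real.sqrt N / σ with hzdef
  have hPhi0 := Phi_nonneg z
  have hPhi1 := Phi_le_one z
  rcases le_or_gt p (μ + σ) with hp | hp
  · rcases le_or_gt p 0 with hp0 | hp0
    · calc p * (1 - Phi z) ≤ 0 := mul_nonpos_of_nonpos_of_nonneg hp0 (by linarith)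
        _ ≤ μ + σ := by linarith
    · calc p * (1 - Phi z) ≤ p * 1 := by nlinarith
        _ ≤ μ + σ := by linarith
  · have hsN : 1 ≤ Real.sqrt N := by
      rw [show (1:ℝ) = Real.sqrt 1 by simp]
      exact Real.sqrt_le_sqrt hN
    have hpos : 0 < p := by linarith
    have hz1 : 1 ≤ z := by
      rw [hzdef, le_div_iff₀ hσ, one_mul]
      nlinarith
    have hz0 : 0 < z := by linarith
    have hpz : p ≤ μ + σ * z := by
      have : p - μ = σ * z / Real.sqrt N := by
        rw [hzdef]; field_simp
      have h2 := div_le_self (mul_nonneg hσ.le hz0.le) hsN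
      linarith
    have hm := one_sub_Phi_le hz0
    have hpdf0 := stdPDF_nonneg z
    have hpdf1 := stdPDF_le_one z
    calc p * (1 - Phi z) ≤ p * (stdPDF z / z) := by
          refine mul_le_mul_of_nonneg_left hm hpos.le
      _ ≤ (μ + σ * z) * (stdPDF z / z) := by
          refine mul_le_mul_of_nonneg_right hpz (div_nonneg hpdf0 hz0.le)
      _ = μ * (stdPDF z / z) + σ * stdPDF z := by field_simp
      _ ≤ μ * stdPDF z + σ * stdPDF z := by
          have : stdPDF z / z ≤ stdPDF z := by
            rw [div_le_iff₀ hz0]; nlinarith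
          nlinarith
      _ ≤ μ + σ := by nlinarith

theorem stmt6 (μ σ : ℝ) (hμ : 0 ≤ μ) (hσ : 0 < σ) (n : ℕ) (hn : 2 ≤ n) :
    (μ - σ * Real.sqrt (Real.log n / n)
        - μ / Real.sqrt (2 * Real.pi * n * Real.log n)
      ≤ (μ - σ * Real.sqrt (Real.log n / n)) *
          (1 - Phi (((μ - σ * Real.sqrt (Real.log n / n)) - μ) * Real.sqrt n / σ)))
    ∧ μ - σ * Real.sqrt (Real.log n / n)
        - μ / Real.sqrt (2 * Real.pi * n * Real.log n)
      ≤ ⨆ p : ℝ, p * (1 - Phi ((p - μ) * Real.sqrt n / σ)) := by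
  have hN2 : (2:ℝ) ≤ (n:ℝ) := by exact_mod_cast hn
  have hNpos : (0:ℝ) < (n:ℝ) := by linarith
  have hlog : 0 < Real.log n := Real.log_pos (by linarith)
  set L := Real.sqrt (Real.log n) with hLdef
  have hLpos : 0 < L := Real.sqrt_pos.mpr hlog
  have hsNpos : 0 < Real.sqrt n := Real.sqrt_pos.mpr hNpos
  have harg : ((μ - σ * Real.sqrt (Real.log n / n)) - μ) * Real.sqrt n / σ = -L := by
    rw [Real.sqrt_div hlog.le, hLdef]
    field_simp
    ring
  have hexp : Real.exp (-L ^ 2 / 2) = (Real.sqrt n)⁻¹ := by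
    rw [hLdef, Real.sq_sqrt hlog.le, neg_div, ← Real.log_sqrt hNpos.le,
      Real.exp_neg, Real.exp_log hsNpos]
  have h5 : Real.sqrt (2 * Real.pi * n * Real.log n)
      = Real.sqrt (2 * Real.pi) * (Real.sqrt n * L) := by
    rw [show 2 * Real.pi * (n:ℝ) * Real.log n = (2 * Real.pi) * ((n:ℝ) * Real.log n) by ring,
      Real.sqrt_mul (by positivity : (0:ℝ) ≤ 2 * Real.pi), Real.sqrt_mul hNpos.le, hLdef]
  have hkey : stdPDF L / L = (Real.sqrt (2 * Real.pi * n * Real.log n))⁻¹ := by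
    rw [stdPDF, hexp, h5, mul_inv, mul_inv, div_eq_mul_inv]
    ring
  have hPhiL : Phi (-L) ≤ stdPDF L / L := by
    rw [Phi_neg]; exact one_sub_Phi_le hLpos
  have hPhi0 : 0 ≤ Phi (-L) := Phi_nonneg _
  set p := μ - σ * Real.sqrt (Real.log n / n) with hpdef
  have hpμ : p ≤ μ := by
    have h6 : 0 ≤ σ * Real.sqrt (Real.log n / n) := by positivity
    rw [hpdef]; linarith
  have hpdfL : 0 ≤ stdPDF L / L := div_nonneg (stdPDF_nonneg L) hLpos.le
  have hkey2 : p * Phi (-L) ≤ μ * (stdPDF L / L) := by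
    rcases le_or_gt p 0 with hp0 | hp0
    · calc p * Phi (-L) ≤ 0 := mul_nonpos_of_nonpos_of_nonneg hp0 hPhi0
        _ ≤ μ * (stdPDF L / L) := by positivity
    · exact mul_le_mul hpμ hPhiL hPhi0 hμ
  have hμdiv : μ / Real.sqrt (2 * Real.pi * n * Real.log n) = μ * (stdPDF L / L) := by
    rw [hkey, div_eq_mul_inv]
  have hfirst : p - μ / Real.sqrt (2 * Real.pi * n * Real.log n)
      ≤ p * (1 - Phi (((μ - σ * Real.sqrt (Real.log n / n)) - μ) * Real.sqrt n / σ)) := by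
    rw [harg]
    have hexpand : p * (1 - Phi (-L)) = p - p * Phi (-L) := by ring
    rw [hexpand, hμdiv]
    linarith
  refine ⟨hfirst, hfirst.trans ?_⟩
  have hbdd : BddAbove (Set.range fun q : ℝ => q * (1 - Phi ((q - μ) * Real.sqrt n / σ))) := by
    refine ⟨μ + σ, ?_⟩
    rintro _ ⟨q, rfl⟩
    exact revBound μ σ hμ hσ n (by linarith) q
  exact le_ciSup hbdd p
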